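/- The function z ↦ ψ(z)/Γ(z), a priori defined on ℂ minus the nonpositive integers, extends to an entire function F on all of ℂ; this extension satisfies F(0) = −1, and the zero set of F coincides with the zero set of ψ (in particular F has no zeros at the nonpositive integers). -/

import Mathlib

/-! The entire function is `F = -(1/Γ)'`: off the poles the quotient rule gives
`-(1/Γ)' = Γ'/Γ² = ψ/Γ`, and differentiating `1/Γ(s) = s · 1/Γ(s+1)` yields
`(1/Γ)'(-n) = (-1)ⁿ n!`, which is nonzero. -/

open Complex

theorem deriv_inv_Gamma_eq (s : ℂ) :
    deriv (fun w => (Gamma w)⁻¹) s =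
      (Gamma (s + 1))⁻¹ + s * deriv (fun w => (Gamma w)⁻¹) (s + 1) := by
  have hshift : DifferentiableAt ℂ (fun w => (Gamma (w + 1))⁻¹) s :=
    (differentiable_one_div_Gamma _).comp s (differentiableAt_id.add_const 1)
  conv_lhs => rw [funext one_div_Gamma_eq_self_mul_one_div_Gamma_add_one]
  rw [deriv_fun_mul differentiableAt_fun_id hshift, deriv_comp_add_const (fun w => (Gamma w)⁻¹)]
  simp

theorem deriv_inv_Gamma_neg_nat (n : ℕ) :
    deriv (fun w => (Gamma w)⁻¹) (-n) = (-1) ^ n * n.factorial := by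
  induction n with
  | zero => rw [Nat.cast_zero, neg_zero, deriv_inv_Gamma_eq]; simp
  | succ n ih =>
    have hpole : -((n + 1 : ℕ) : ℂ) + 1 = -n := by push_cast; ring
    rw [deriv_inv_Gamma_eq, hpole, ih, Gamma_neg_nat_eq_zero, inv_zero, Nat.factorial_succ]
    push_cast
    ring

theorem deriv_inv_Gamma_eq_neg_logDeriv_div {z : ℂ} (hz : ∀ n : ℕ, z ≠ -n) :
    deriv (fun w => (Gamma w)⁻¹) z = -(logDeriv Gamma z / Gamma z) := by
  rw [deriv_fun_inv'' (differentiableAt_Gamma z hz) (Gamma_ne_zero hz), logDeriv_apply,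
    div_div, sq, neg_div]

/-- The function `z ↦ ψ(z)/Γ(z)` (with `ψ = Γ'/Γ` the Digamma function), a priori defined
off the nonpositive integers, extends to an entire function `F`; the extension satisfies
`F 0 = -1` and its zero set coincides with the zero set of `ψ` (in particular `F` has no
zeros at the nonpositive integers). -/
theorem digamma_div_Gamma_extends_entire :
    ∃ F : ℂ → ℂ, Differentiable ℂ F ∧
      (∀ z : ℂ, (∀ n : ℕ, z ≠ -(n : ℂ)) →
        F z = logDeriv Complex.Gamma z / Complex.Gamma z) ∧
      F 0 = -1 ∧
      (∀ z : ℂ, F z = 0 ↔ ((∀ n : ℕ, z ≠ -(n : ℂ)) ∧ logDeriv Complex.Gamma z = 0)) := by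
  refine ⟨fun z => -deriv (fun w => (Gamma w)⁻¹) z, differentiable_one_div_Gamma.deriv.neg,
    fun z hz => by simp only [deriv_inv_Gamma_eq_neg_logDeriv_div hz, neg_neg], ?_, fun z => ?_⟩
  · simpa using deriv_inv_Gamma_neg_nat 0
  · by_cases hz : ∀ n : ℕ, z ≠ -n
    · simp [deriv_inv_Gamma_eq_neg_logDeriv_div hz, hz, Gamma_ne_zero hz]
    · obtain ⟨n, rfl⟩ := not_forall_not.mp hz
      simp [deriv_inv_Gamma_neg_nat, Nat.factorial_ne_zero]
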